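/- arXiv:2205.11176 — 5 statements merged into one kernel-verified Lean document; each statement's English description precedes it below -/
import Mathlib

section
/- Let L₁ and L₂ be principal 𝕋-bundles and let T : C₀^𝕋(L₁) → C₀^𝕋(L₂) be a (not necessarily continuous) linear orthogonality preserving map. For every s ∈ L₂ with δ_s∘T ≠ 0, the set supp(δ_s∘T) is nonempty and is exactly one 𝕋-orbit: for any t₁, t₂ ∈ supp(δ_s∘T) one has t₁ ∈ 𝕋t₂ (so there exists t ∈ L̂₁ with supp(δ_s∘T) = 𝕋t). -/
open scoped ZeroAtInfty

noncomputable section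

/-- A principal `𝕋`-bundle: a `𝕋`-symmetric subset `L` of an ambient complex topological
vector space not containing `0` such that `L ∪ {0}` is compact. -/
structure TBundle (E : Type*) [AddCommGroup E] [Module ℂ E] [TopologicalSpace E] where
  carrier : Set E
  smul_mem : ∀ z : ℂ, ‖z‖ = 1 → ∀ t ∈ carrier, z • t ∈ carrier
  zero_not_mem : (0 : E) ∉ carrier
  isCompact_union : IsCompact (carrier ∪ {0})

variable {E F : Type*} [AddCommGroup E] [Module ℂ E] [TopologicalSpace E]
  [AddCommGroup F] [Module ℂ F] [TopologicalSpace F]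

/-- `L̂ = L ∪ {0}`. -/
def TBundle.hat (L : TBundle E) : Set E := L.carrier ∪ {0}

/-- A subset `S` is `𝕋`-symmetric if `𝕋S = S`. -/
def TSymm (S : Set E) : Prop := ∀ z : ℂ, ‖z‖ = 1 → ∀ x ∈ S, z • x ∈ S

/-- Rotation of a point of `L` by a unimodular scalar. -/
def TBundle.sm (L : TBundle E) (z : ℂ) (hz : ‖z‖ = 1) (t : L.carrier) : L.carrier :=
  ⟨z • (t : E), L.smul_mem z hz t t.2⟩

theorem TBundle.hat_smul_mem (L : TBundle E) (z : ℂ) (hz : ‖z‖ = 1) {x : E}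
    (hx : x ∈ L.hat) : z • x ∈ L.hat := by
  rcases hx with hx | hx
  · exact Or.inl (L.smul_mem z hz x hx)
  · simp only [Set.mem_singleton_iff] at hx
    subst hx
    right; simp

/-- Rotation of a point of `L̂` by a unimodular scalar. -/
def TBundle.hsm (L : TBundle E) (z : ℂ) (hz : ‖z‖ = 1) (t : L.hat) : L.hat :=
  ⟨z • (t : E), L.hat_smul_mem z hz t.2⟩

/-- The commutative JB*-triple `C₀^𝕋(L)` of `𝕋`-equivariant elements of `C₀(L, ℂ)`,
as a (closed) submodule of `C₀(L, ℂ)`. -/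
def TBundle.C0T (L : TBundle E) : Submodule ℂ C₀(↥L.carrier, ℂ) where
  carrier := {a | ∀ (z : ℂ) (hz : ‖z‖ = 1) (t : L.carrier), a (L.sm z hz t) = z * a t}
  add_mem' := by
    intro a b ha hb z hz t
    simp [ha z hz t, hb z hz t, mul_add]
  zero_mem' := by intro z hz t; simp
  smul_mem' := by
    intro c a ha z hz t
    simp [ha z hz t]
    ring

/-- `T` preserves orthogonality: functions with zero pointwise product are mapped to
functions with zero pointwise product. -/
def OrthogonalityPreserving (L₁ : TBundle E) (L₂ : TBundle F)
    (T : L₁.C0T →ₗ[ℂ] L₂.C0T) : Prop :=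
  ∀ a b : L₁.C0T, (∀ t : L₁.carrier, a.1 t * b.1 t = 0) →
    ∀ s : L₂.carrier, (T a).1 s * (T b).1 s = 0

/-- The support of the functional `δ_s ∘ T`: all `t ∈ L̂₁` such that every `𝕋`-symmetric
relatively open neighbourhood `U` of `t` in `L̂₁` contains the cozero set of some
`a ∈ C₀^𝕋(L₁)` with `T(a)(s) ≠ 0`. -/
def suppDelta {L₁ : TBundle E} {L₂ : TBundle F} (T : L₁.C0T →ₗ[ℂ] L₂.C0T)
    (s : L₂.carrier) : Set E :=
  {t | t ∈ L₁.hat ∧ ∀ U : Set E, t ∈ U → TSymm U →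
      (∃ V : Set E, IsOpen V ∧ U = V ∩ L₁.hat) →
      ∃ a : L₁.C0T, (∀ x : L₁.carrier, (x : E) ∉ U → a.1 x = 0) ∧ (T a).1 s ≠ 0}

/-- The set `L₂^z` of points where `δ_s ∘ T` vanishes. -/
def Lzero {L₁ : TBundle E} {L₂ : TBundle F} (T : L₁.C0T →ₗ[ℂ] L₂.C0T) :
    Set L₂.carrier :=
  {s | ∀ a : L₁.C0T, (T a).1 s = 0}

/-- The set `L₂^d` of points where `δ_s ∘ T` is discontinuous (w.r.t. the sup norm). -/
def Ldisc {L₁ : TBundle E} {L₂ : TBundle F} (T : L₁.C0T →ₗ[ℂ] L₂.C0T) :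
    Set L₂.carrier :=
  {s | ¬ Continuous fun a : L₁.C0T => (T a).1 s}

/-- The set `L₂^{nz}` of points where `δ_s ∘ T` is nonzero. -/
def Lnz {L₁ : TBundle E} {L₂ : TBundle F} (T : L₁.C0T →ₗ[ℂ] L₂.C0T) :
    Set L₂.carrier :=
  {s | ∃ a : L₁.C0T, (T a).1 s ≠ 0}

/-- The set `L₂^c` of points where `δ_s ∘ T` is nonzero and norm-continuous. -/
def Lcont {L₁ : TBundle E} {L₂ : TBundle F} (T : L₁.C0T →ₗ[ℂ] L₂.C0T) :
    Set L₂.carrier :=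
  {s | (∃ a : L₁.C0T, (T a).1 s ≠ 0) ∧ Continuous fun a : L₁.C0T => (T a).1 s}

/-- The `𝕋`-orbit of a point. -/
def Torbit (t : E) : Set E := {x | ∃ z : ℂ, ‖z‖ = 1 ∧ x = z • t}

/-- The equivalence relation on `L̂` identifying points of the same `𝕋`-orbit. -/
def TBundle.orbitSetoid (L : TBundle E) : Setoid ↥L.hat where
  r t₁ t₂ := ∃ z : ℂ, ‖z‖ = 1 ∧ (t₂ : E) = z • (t₁ : E)
  iseqv := by
    constructor
    · intro t; exact ⟨1, by simp, by simp⟩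
    · rintro t₁ t₂ ⟨z, hz, h⟩
      have hz0 : z ≠ 0 := by intro h0; rw [h0] at hz; simp at hz
      refine ⟨z⁻¹, by simp [hz], ?_⟩
      rw [h, smul_smul, inv_mul_cancel₀ hz0, one_smul]
    · rintro t₁ t₂ t₃ ⟨z, hz, h⟩ ⟨w, hw, h'⟩
      exact ⟨w * z, by simp [hz, hw], by rw [h', h, smul_smul]⟩

/-- The cozero set of an element of `C₀^𝕋(L)`, as a subset of the ambient space. -/
def coz {L : TBundle E} (a : L.C0T) : Set E := (↑) '' {t : L.carrier | a.1 t ≠ 0}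

/-! If every point of `L̂₁` had a `𝕋`-symmetric neighbourhood on which `δ_s ∘ T` vanishes, a
`𝕋`-invariant partition of unity subordinate to a finite subcover would split every `a` into pieces
annihilated by `δ_s ∘ T`; such a partition comes from an ordinary one by taking suprema over the
(compact) orbits and renormalising. Hence the support is nonempty. Two points of the support in
different orbits have disjoint `𝕋`-symmetric open neighbourhoods, carrying `a₁, a₂` with
`a₁ a₂ = 0` but `T a₁ (s) ≠ 0 ≠ T a₂ (s)`, contradicting orthogonality preservation. -/

open Set Function Filter

section CompactGroupAction

variable {G X : Type*} [Group G] [TopologicalSpace G] [CompactSpace G]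
  [TopologicalSpace X] [MulAction G X] [ContinuousSMul G X]

theorem isOpen_setOf_forall_smul_mem {V : Set X} (hV : IsOpen V) :
    IsOpen {x : X | ∀ g : G, g • x ∈ V} := by
  have hcompl : {x : X | ∀ g : G, g • x ∈ V}ᶜ =
      Prod.snd '' ((fun p : G × X => p.1 • p.2) ⁻¹' Vᶜ) := by
    ext x
    simp
  rw [← isClosed_compl_iff, hcompl]
  exact isClosedMap_snd_of_compactSpace _ (hV.isClosed_compl.preimage continuous_smul)

theorem exists_invariant_open_separating_orbits [T2Space X] {x y : X}
    (h : x ∉ MulAction.orbit G y) :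
    ∃ V₁ V₂ : Set X, IsOpen V₁ ∧ IsOpen V₂ ∧ (∀ g : G, ∀ v ∈ V₁, g • v ∈ V₁) ∧
      (∀ g : G, ∀ v ∈ V₂, g • v ∈ V₂) ∧ x ∈ V₁ ∧ y ∈ V₂ ∧ Disjoint V₁ V₂ := by
  have hcompact (z : X) : IsCompact (MulAction.orbit G z) :=
    isCompact_range (continuous_id.smul continuous_const)
  have hdisj : Disjoint (MulAction.orbit G x) (MulAction.orbit G y) :=
    (MulAction.orbit.eq_or_disjoint x y).resolve_left (h ∘ MulAction.orbit_eq_iff.1)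
  obtain ⟨W₁, W₂, hW₁, hW₂, hxW₁, hyW₂, hW⟩ :=
    SeparatedNhds.of_isCompact_isCompact (hcompact x) (hcompact y) hdisj
  have hcore_inv (W : Set X) (g : G) (v : X) (hv : ∀ h : G, h • v ∈ W) :
      ∀ h : G, h • g • v ∈ W := fun h => by rw [smul_smul]; exact hv _
  refine ⟨_, _, isOpen_setOf_forall_smul_mem hW₁, isOpen_setOf_forall_smul_mem hW₂,
    fun g v hv => hcore_inv W₁ g v hv, fun g v hv => hcore_inv W₂ g v hv,
    fun g => hxW₁ (MulAction.mem_orbit x g), fun g => hyW₂ (MulAction.mem_orbit y g),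
    hW.mono (fun v hv => by simpa using hv 1) (fun v hv => by simpa using hv 1)⟩

variable (G) in
noncomputable def orbitSup (f : C(X, ℝ)) : C(X, ℝ) where
  toFun x := sSup ((fun g : G => f (g • x)) '' univ)
  continuous_toFun :=
    isCompact_univ.continuous_sSup (f := fun x (g : G) => f (g • x)) (by fun_prop)

theorem orbitSup_apply (f : C(X, ℝ)) (x : X) :
    orbitSup G f x = sSup (range fun g : G => f (g • x)) := by
  rw [← image_univ]; rfl

theorem orbitSup_smul (f : C(X, ℝ)) (g : G) (x : X) :
    orbitSup G f (g • x) = orbitSup G f x := by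
  simp only [orbitSup_apply, smul_smul]
  exact congrArg sSup ((mul_right_surjective g).range_comp fun h => f (h • x))

theorem le_orbitSup (f : C(X, ℝ)) (x : X) : f x ≤ orbitSup G f x := by
  rw [orbitSup_apply]
  exact le_csSup (isCompact_range (by fun_prop)).bddAbove ⟨1, by simp⟩

theorem support_orbitSup_subset {U : Set X} (hU : ∀ g : G, ∀ x ∈ U, g • x ∈ U)
    {f : C(X, ℝ)} (hf : support f ⊆ U) : support (orbitSup G f) ⊆ U := by
  intro x hx
  by_contra hxU
  have hzero : (fun g : G => f (g • x)) = fun _ => 0 := funext fun g =>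
    notMem_support.1 fun hg => hxU (by simpa using hU g⁻¹ _ (hf hg))
  exact hx (by rw [orbitSup_apply, hzero, range_const, csSup_singleton])

theorem exists_invariant_partition_of_unity [CompactSpace X] [T2Space X] {ι : Type*}
    [Fintype ι] {U : ι → Set X} (hUo : ∀ i, IsOpen (U i))
    (hUinv : ∀ i, ∀ g : G, ∀ x ∈ U i, g • x ∈ U i) (hcov : univ ⊆ ⋃ i, U i) :
    ∃ ψ : ι → C(X, ℝ), (∀ i, ∀ g : G, ∀ x, ψ i (g • x) = ψ i x) ∧
      (∀ i, support (ψ i) ⊆ U i) ∧ ∀ x, ∑ i, ψ i x = 1 := by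
  obtain ⟨f, hf⟩ := PartitionOfUnity.exists_isSubordinate isClosed_univ U hUo hcov
  set φ : ι → C(X, ℝ) := fun i => orbitSup G (f i)
  have hφpos (x : X) : 0 < ∑ i, φ i x := by
    have hsum : ∑ i, f i x = 1 := by
      rw [← finsum_eq_sum_of_fintype]; exact f.sum_eq_one (mem_univ x)
    calc (0 : ℝ) < ∑ i, f i x := by rw [hsum]; exact one_pos
      _ ≤ ∑ i, φ i x := Finset.sum_le_sum fun i _ => le_orbitSup _ _
  refine ⟨fun i => ⟨fun x => φ i x / ∑ j, φ j x,
    (φ i).continuous.div (by fun_prop) fun x => (hφpos x).ne'⟩, ?_, ?_, ?_⟩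
  · intro i g x
    simp only [ContinuousMap.coe_mk, φ, orbitSup_smul]
  · intro i x hx
    refine support_orbitSup_subset (hUinv i) ((subset_tsupport _).trans (hf i)) ?_
    exact left_ne_zero_of_mul (by simpa [div_eq_mul_inv] using hx)
  · intro x
    simp only [ContinuousMap.coe_mk, ← Finset.sum_div]
    exact div_self (hφpos x).ne'

end CompactGroupAction

theorem tSymm_iff_forall_circle_smul_mem {M : Type*} [AddCommGroup M] [Module ℂ M]
    {S : Set M} : TSymm S ↔ ∀ g : Circle, ∀ x ∈ S, g • x ∈ S :=
  ⟨fun h g => h g g.norm_coe, fun h z hz => h ⟨z, mem_sphere_zero_iff_norm.2 hz⟩⟩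

namespace TBundle

instance (L : TBundle E) : MulAction Circle L.hat where
  smul g t := L.hsm g g.norm_coe t
  one_smul t := Subtype.ext (one_smul ℂ (t : E))
  mul_smul g h t := Subtype.ext (mul_smul (g : ℂ) (h : ℂ) (t : E))

instance [ContinuousSMul ℂ E] (L : TBundle E) : ContinuousSMul Circle L.hat :=
  ⟨(continuous_smul.comp (continuous_fst.prodMk
    (continuous_subtype_val.comp continuous_snd))).subtype_mk _⟩

instance (L : TBundle E) : CompactSpace L.hat :=
  isCompact_iff_compactSpace.mp L.isCompact_union

def inclHat (L : TBundle E) : C(L.carrier, L.hat) :=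
  ⟨fun t => ⟨t, Or.inl t.2⟩, continuous_subtype_val.subtype_mk _⟩

def evalC0T (L : TBundle E) (t : L.carrier) : L.C0T →ₗ[ℂ] ℂ where
  toFun a := a.1 t
  map_add' _ _ := rfl
  map_smul' _ _ := rfl

theorem evalC0T_apply (L : TBundle E) (t : L.carrier) (a : L.C0T) : L.evalC0T t a = a.1 t :=
  rfl

def invariantMul (L : TBundle E) (ψ : C(L.hat, ℝ))
    (hψ : ∀ (g : Circle) t, ψ (g • t) = ψ t) (a : L.C0T) : L.C0T :=
  ⟨⟨⟨fun t => ψ (L.inclHat t) * a.1 t, by fun_prop⟩, by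
    obtain ⟨C, hC⟩ := (isCompact_range ψ.continuous).isBounded.exists_norm_le
    refine Filter.isBoundedUnder_le_mul_tendsto_zero ⟨C, ?_⟩ a.1.zero_at_infty'
    exact eventually_map.2 (Eventually.of_forall fun t => by simpa using hC _ ⟨_, rfl⟩)⟩,
   fun z hz t => by
    let g : Circle := ⟨z, mem_sphere_zero_iff_norm.2 hz⟩
    show (ψ (g • L.inclHat t) : ℂ) * a.1 (L.sm z hz t) =
      z * (ψ (L.inclHat t) * a.1 t)
    rw [hψ, a.2 z hz t]
    ring⟩

theorem invariantMul_apply (L : TBundle E) (ψ : C(L.hat, ℝ))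
    (hψ : ∀ (g : Circle) t, ψ (g • t) = ψ t) (a : L.C0T) (t : L.carrier) :
    (L.invariantMul ψ hψ a).1 t = ψ (L.inclHat t) * a.1 t := rfl

theorem sum_invariantMul {ι : Type*} (s : Finset ι) (L : TBundle E) (ψ : ι → C(L.hat, ℝ))
    (hψ : ∀ i, ∀ (g : Circle) t, ψ i (g • t) = ψ i t) (hsum : ∀ t, ∑ i ∈ s, ψ i t = 1)
    (a : L.C0T) : ∑ i ∈ s, L.invariantMul (ψ i) (hψ i) a = a := by
  ext t
  change L.evalC0T t _ = _
  rw [map_sum]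
  simp only [evalC0T_apply, invariantMul_apply, ← Finset.sum_mul, ← Complex.ofReal_sum, hsum,
    Complex.ofReal_one, one_mul]

theorem eq_zero_of_locally_zero [ContinuousSMul ℂ E] [T2Space E] (L : TBundle E)
    (φ : L.C0T →ₗ[ℂ] ℂ)
    (h : ∀ t ∈ L.hat, ∃ U : Set E, t ∈ U ∧ TSymm U ∧ (∃ V : Set E, IsOpen V ∧ U = V ∩ L.hat) ∧
      ∀ a : L.C0T, (∀ x : L.carrier, (x : E) ∉ U → a.1 x = 0) → φ a = 0) :
    φ = 0 := by
  choose U htU hUsymm hUrel hφU using fun t : L.hat => h t t.2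
  choose V hVo hUV using hUrel
  set W : L.hat → Set L.hat := fun t => Subtype.val ⁻¹' V t
  have hWo (t : L.hat) : IsOpen (W t) := (hVo t).preimage continuous_subtype_val
  have hW (t x : L.hat) : x ∈ W t ↔ (x : E) ∈ U t := by simp [W, hUV, x.2]
  obtain ⟨S, hS⟩ := CompactSpace.elim_nhds_subcover W fun t =>
    (hWo t).mem_nhds ((hW t t).2 (htU t))
  have hcov : univ ⊆ ⋃ i : S, W i := fun x _ => by
    obtain ⟨t, ht, hx⟩ := mem_iUnion₂.1 (hS.ge (mem_univ x))
    exact mem_iUnion.2 ⟨⟨t, ht⟩, hx⟩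
  have hWinv (i : S) (g : Circle) (x : L.hat) (hx : x ∈ W i) : g • x ∈ W i :=
    (hW _ _).2 (tSymm_iff_forall_circle_smul_mem.1 (hUsymm i) g _ ((hW _ _).1 hx))
  obtain ⟨ψ, hψinv, hψsupp, hψsum⟩ :=
    exists_invariant_partition_of_unity (G := Circle) (U := fun i : S => W i)
      (fun i => hWo i) hWinv hcov
  ext a
  rw [← L.sum_invariantMul Finset.univ ψ hψinv (fun t => hψsum t) a, map_sum]
  refine Finset.sum_eq_zero fun i _ => hφU i _ fun x hx => ?_
  rw [invariantMul_apply, notMem_support.1 fun hψx => hx ((hW _ _).1 (hψsupp i hψx)),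
    Complex.ofReal_zero, zero_mul]

end TBundle

theorem suppDelta_nonempty [ContinuousSMul ℂ E] [T2Space E] {L₁ : TBundle E}
    {L₂ : TBundle F} (T : L₁.C0T →ₗ[ℂ] L₂.C0T) {s : L₂.carrier}
    (hs : ∃ a : L₁.C0T, (T a).1 s ≠ 0) : (suppDelta T s).Nonempty := by
  by_contra hempty
  obtain ⟨a, ha⟩ := hs
  refine ha (LinearMap.congr_fun (L₁.eq_zero_of_locally_zero ((L₂.evalC0T s).comp T)
    fun t ht => ?_) a)
  have hnot : ¬ (t ∈ L₁.hat ∧ _) := fun htsupp => hempty ⟨t, htsupp⟩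
  push Not at hnot
  exact hnot ht

theorem smul_mem_suppDelta {L₁ : TBundle E} {L₂ : TBundle F} {T : L₁.C0T →ₗ[ℂ] L₂.C0T}
    {s : L₂.carrier} {t : E} (ht : t ∈ suppDelta T s) {z : ℂ} (hz : ‖z‖ = 1) :
    z • t ∈ suppDelta T s := by
  refine ⟨L₁.hat_smul_mem z hz ht.1, fun U hzt hU hUrel => ht.2 U ?_ hU hUrel⟩
  have hz0 : z ≠ 0 := norm_ne_zero_iff.1 (by rw [hz]; exact one_ne_zero)
  simpa [smul_smul, hz0] using hU z⁻¹ (by rw [norm_inv, hz, inv_one]) _ hzt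

theorem exists_eq_smul_of_mem_suppDelta [ContinuousSMul ℂ E] [T2Space E] {L₁ : TBundle E}
    {L₂ : TBundle F} {T : L₁.C0T →ₗ[ℂ] L₂.C0T} (hT : OrthogonalityPreserving L₁ L₂ T)
    {s : L₂.carrier} {t₁ t₂ : E} (h₁ : t₁ ∈ suppDelta T s) (h₂ : t₂ ∈ suppDelta T s) :
    ∃ z : ℂ, ‖z‖ = 1 ∧ t₁ = z • t₂ := by
  by_contra h
  obtain ⟨V₁, V₂, hV₁o, hV₂o, hV₁inv, hV₂inv, ht₁, ht₂, hV⟩ :=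
    exists_invariant_open_separating_orbits (G := Circle) (x := t₁) (y := t₂)
      fun ⟨g, hg⟩ => h ⟨g, g.norm_coe, hg.symm⟩
  have hsymm {V : Set E} (hV : ∀ g : Circle, ∀ v ∈ V, g • v ∈ V) : TSymm (V ∩ L₁.hat) :=
    tSymm_iff_forall_circle_smul_mem.2 fun g x hx =>
      ⟨hV g x hx.1, L₁.hat_smul_mem g g.norm_coe hx.2⟩
  obtain ⟨a₁, ha₁, hTa₁⟩ := h₁.2 (V₁ ∩ L₁.hat) ⟨ht₁, h₁.1⟩ (hsymm hV₁inv) ⟨V₁, hV₁o, rfl⟩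
  obtain ⟨a₂, ha₂, hTa₂⟩ := h₂.2 (V₂ ∩ L₁.hat) ⟨ht₂, h₂.1⟩ (hsymm hV₂inv) ⟨V₂, hV₂o, rfl⟩
  have horth (x : L₁.carrier) : a₁.1 x * a₂.1 x = 0 := by
    by_contra hx
    obtain ⟨hx₁, hx₂⟩ := mul_ne_zero_iff.1 hx
    exact hV.ne_of_mem (not_not.1 (mt (ha₁ x) hx₁)).1 (not_not.1 (mt (ha₂ x) hx₂)).1 rfl
  exact mul_ne_zero hTa₁ hTa₂ (hT a₁ a₂ horth s)

section MainStatements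

variable [IsTopologicalAddGroup E] [ContinuousSMul ℂ E] [T2Space E]
  [Module ℝ E] [IsScalarTower ℝ ℂ E] [LocallyConvexSpace ℝ E]
  [IsTopologicalAddGroup F] [ContinuousSMul ℂ F] [T2Space F]
  [Module ℝ F] [IsScalarTower ℝ ℂ F] [LocallyConvexSpace ℝ F]

set_option linter.unusedSectionVars false

/-- For a linear orthogonality preserving map
`T : C₀^𝕋(L₁) → C₀^𝕋(L₂)` and every `s ∈ L₂` with `δ_s ∘ T ≠ 0`, the set
`supp(δ_s ∘ T)` is nonempty and is exactly one `𝕋`-orbit. -/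
theorem suppDelta_single_orbit (L₁ : TBundle E) (L₂ : TBundle F)
    (T : L₁.C0T →ₗ[ℂ] L₂.C0T) (hT : OrthogonalityPreserving L₁ L₂ T) :
    ∀ s : L₂.carrier, (∃ a : L₁.C0T, (T a).1 s ≠ 0) →
      (suppDelta T s).Nonempty ∧
      (∀ t₁ ∈ suppDelta T s, ∀ t₂ ∈ suppDelta T s, ∃ z : ℂ, ‖z‖ = 1 ∧ t₁ = z • t₂) ∧
      ∃ t ∈ L₁.hat, suppDelta T s = Torbit t := by
  intro s hs
  obtain ⟨t, ht⟩ := suppDelta_nonempty T hs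
  refine ⟨⟨t, ht⟩, fun t₁ h₁ t₂ h₂ => exists_eq_smul_of_mem_suppDelta hT h₁ h₂, t, ht.1, ?_⟩
  ext x
  constructor
  · exact fun hx => exists_eq_smul_of_mem_suppDelta hT hx ht
  · rintro ⟨z, hz, rfl⟩
    exact smul_mem_suppDelta ht hz

end MainStatements
end
end

section
/- Let L₁ and L₂ be principal 𝕋-bundles and let T : C₀^𝕋(L₁) → C₀^𝕋(L₂) be a (not necessarily continuous) linear orthogonality preserving map. If s ∈ L₂ satisfies δ_s∘T ≠ 0 and a ∈ C₀^𝕋(L₁) satisfies supp(δ_s∘T) ⊄ supp(a) (i.e., some point of supp(δ_s∘T) lies outside the closure of coz(a)), then T(a)(s) = 0. -/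
/-! The complement of the closure of `coz a` is an open `𝕋`-symmetric neighbourhood of a
point of `supp(δ_s ∘ T)`, so it contains the cozero set of some `b` with `T(b)(s) ≠ 0`.
Then `a` and `b` are orthogonal, hence so are `T a` and `T b`, and `T(a)(s) T(b)(s) = 0`
forces `T(a)(s) = 0`. -/

open scoped ZeroAtInfty

noncomputable section

variable {E F : Type*} [AddCommGroup E] [Module ℂ E] [TopologicalSpace E]
  [AddCommGroup F] [Module ℂ F] [TopologicalSpace F]

theorem TSymm.compl {G : Type*} [AddCommGroup G] [Module ℂ G] {S : Set G} (hS : TSymm S) :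
    TSymm Sᶜ := by
  intro z hz x hx hzx
  have hz0 : z ≠ 0 := by rintro rfl; simp at hz
  apply hx
  simpa [smul_smul, inv_mul_cancel₀ hz0] using hS z⁻¹ (by simp [hz]) _ hzx

theorem TSymm.inter {G : Type*} [AddCommGroup G] [Module ℂ G] {S S' : Set G} (hS : TSymm S)
    (hS' : TSymm S') : TSymm (S ∩ S') :=
  fun z hz x hx => ⟨hS z hz x hx.1, hS' z hz x hx.2⟩

theorem TSymm.closure [ContinuousConstSMul ℂ E] {S : Set E} (hS : TSymm S) :
    TSymm (closure S) := fun z hz _ hx =>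
  closure_mono (Set.image_subset_iff.2 (hS z hz))
    (image_closure_subset_closure_image (continuous_const_smul z) ⟨_, hx, rfl⟩)

theorem TBundle.tSymm_hat (L : TBundle E) : TSymm L.hat := fun z hz _ hx =>
  L.hat_smul_mem z hz hx

theorem tSymm_coz {L : TBundle E} (a : L.C0T) : TSymm (coz a) := by
  rintro z hz _ ⟨u, hu, rfl⟩
  have hz0 : z ≠ 0 := by rintro rfl; simp at hz
  exact ⟨L.sm z hz u, by simpa [a.2 z hz u] using And.intro hz0 hu, rfl⟩

theorem mul_eq_zero_of_eq_zero_on_coz {L : TBundle E} (a b : L.C0T)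
    (hb : ∀ x : L.carrier, (x : E) ∈ coz a → b.1 x = 0) (x : L.carrier) :
    a.1 x * b.1 x = 0 := by
  by_cases hax : a.1 x = 0
  · simp [hax]
  · simp [hb x ⟨x, hax, rfl⟩]

theorem exists_eval_ne_zero_of_mem_suppDelta {L₁ : TBundle E} {L₂ : TBundle F}
    {T : L₁.C0T →ₗ[ℂ] L₂.C0T} {s : L₂.carrier} {t : E} (ht : t ∈ suppDelta T s)
    {V : Set E} (hV : IsOpen V) (hVsymm : TSymm V) (htV : t ∈ V) :
    ∃ b : L₁.C0T, (∀ x : L₁.carrier, (x : E) ∉ V → b.1 x = 0) ∧ (T b).1 s ≠ 0 := by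
  obtain ⟨b, hb, hTb⟩ :=
    ht.2 (V ∩ L₁.hat) ⟨htV, ht.1⟩ (hVsymm.inter L₁.tSymm_hat) ⟨V, hV, rfl⟩
  exact ⟨b, fun x hx => hb x fun hxV => hx hxV.1, hTb⟩

section MainStatements

variable [IsTopologicalAddGroup E] [ContinuousSMul ℂ E] [T2Space E]
  [Module ℝ E] [IsScalarTower ℝ ℂ E] [LocallyConvexSpace ℝ E]
  [IsTopologicalAddGroup F] [ContinuousSMul ℂ F] [T2Space F]
  [Module ℝ F] [IsScalarTower ℝ ℂ F] [LocallyConvexSpace ℝ F]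

theorem eval_eq_zero_of_not_subset_support_general (L₁ : TBundle E) (L₂ : TBundle F)
    (T : L₁.C0T →ₗ[ℂ] L₂.C0T) (hT : OrthogonalityPreserving L₁ L₂ T)
    (s : L₂.carrier)
    (a : L₁.C0T) (ha : ∃ t ∈ suppDelta T s, t ∉ closure (coz a)) :
    (T a).1 s = 0 := by
  obtain ⟨t, ht, hta⟩ := ha
  obtain ⟨b, hb, hTb⟩ := exists_eval_ne_zero_of_mem_suppDelta ht
    isClosed_closure.isOpen_compl (tSymm_coz a).closure.compl hta
  have hab := mul_eq_zero_of_eq_zero_on_coz a b fun x hx => hb x (not_not.2 (subset_closure hx))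
  exact (mul_eq_zero.1 (hT a b hab s)).resolve_right hTb

/-- For a linear orthogonality preserving map
`T : C₀^𝕋(L₁) → C₀^𝕋(L₂)`, if `s ∈ L₂` satisfies `δ_s ∘ T ≠ 0` and some point of
`supp(δ_s ∘ T)` lies outside the closure of the cozero set of `a`, then `T(a)(s) = 0`. -/
theorem eval_eq_zero_of_not_subset_support (L₁ : TBundle E) (L₂ : TBundle F)
    (T : L₁.C0T →ₗ[ℂ] L₂.C0T) (hT : OrthogonalityPreserving L₁ L₂ T)
    (s : L₂.carrier) (hs : ∃ a : L₁.C0T, (T a).1 s ≠ 0)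
    (a : L₁.C0T) (ha : ∃ t ∈ suppDelta T s, t ∉ closure (coz a)) :
    (T a).1 s = 0 :=
  eval_eq_zero_of_not_subset_support_general L₁ L₂ T hT s a ha

end MainStatements
end
end

section
/- With L₁, L₂, T, L₂^c, r, φ as in the context: the function r is locally bounded at every point of L₂^c, i.e., for each s₀ ∈ L₂^c there exist a neighborhood W of s₀ in L₂^c and a constant M > 0 such that r(s) ≤ M for all s ∈ W. -/
open scoped ZeroAtInfty

noncomputable section

variable {E F : Type*} [AddCommGroup E] [Module ℂ E] [TopologicalSpace E]
  [AddCommGroup F] [Module ℂ F] [TopologicalSpace F]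

/-!
For `s ∈ L₂^c` the functionals `δ_s ∘ T` are continuous on the Banach space `C₀^𝕋(L₁)` and
pointwise bounded, `|T(a)(s)| ≤ ‖T a‖`, so by Banach–Steinhaus `|T(a)(s)| ≤ C ‖a‖` uniformly in
`s`. Test this with a peak function at `φ(s)`: a continuous `ℂ`-linear functional taking the value
`1` at `φ(s)` (Hahn–Banach), followed by the radial retraction of `ℂ` onto the unit disc, is
`𝕋`-equivariant, vanishes at infinity on `L₁`, and has norm at most `1`. Then
`r(s) = |T(a)(s)| ≤ C`, so `r` is in fact bounded on all of `L₂^c`.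
-/

open Filter Set Topology

theorem RCLike.separatingDual_of_real {𝕜 V : Type*} [RCLike 𝕜] [AddCommGroup V]
    [TopologicalSpace V] [Module 𝕜 V] [Module ℝ V] [IsScalarTower ℝ 𝕜 V]
    [ContinuousConstSMul 𝕜 V] [SeparatingDual ℝ V] : SeparatingDual 𝕜 V where
  exists_ne_zero' x hx := by
    obtain ⟨f, hf⟩ := SeparatingDual.exists_ne_zero (R := ℝ) hx
    refine ⟨StrongDual.extendRCLike f, fun h => hf ?_⟩
    simpa [h] using (StrongDual.re_extendRCLike_apply (𝕜 := 𝕜) f x).symm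

theorem ZeroAtInftyContinuousMap.exists_bound_of_continuous_eval {𝕜 X D : Type*}
    [NontriviallyNormedField 𝕜] [TopologicalSpace X] [NormedAddCommGroup D] [NormedSpace 𝕜 D]
    [CompleteSpace D] (T : D →ₗ[𝕜] C₀(X, 𝕜)) :
    ∃ C, 0 ≤ C ∧ ∀ x, Continuous (fun a => T a x) → ∀ a, ‖T a x‖ ≤ C * ‖a‖ := by
  let G : {x // Continuous fun a => T a x} → StrongDual 𝕜 D := fun x =>
    { toFun := fun a => T a x
      map_add' := by simp
      map_smul' := by simp
      cont := x.2 }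
  obtain ⟨C, hC⟩ := banach_steinhaus (g := G) fun a =>
    ⟨‖T a‖, fun x => (T a).toBCF.norm_coe_le_norm x⟩
  refine ⟨max C 0, le_max_right _ _, fun x hx a => ?_⟩
  calc ‖T a x‖ = ‖G ⟨x, hx⟩ a‖ := rfl
    _ ≤ ‖G ⟨x, hx⟩‖ * ‖a‖ := (G ⟨x, hx⟩).le_opNorm a
    _ ≤ max C 0 * ‖a‖ := by gcongr; exact (hC _).trans (le_max_left _ _)

def unitDiscRetraction (z : ℂ) : ℂ := (max 1 ‖z‖)⁻¹ • z

theorem continuous_unitDiscRetraction : Continuous unitDiscRetraction :=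
  ((continuous_const.max continuous_norm).inv₀ fun _ => by positivity).smul continuous_id

theorem unitDiscRetraction_one : unitDiscRetraction 1 = 1 := by
  simp [unitDiscRetraction]

theorem norm_unitDiscRetraction_le (z : ℂ) : ‖unitDiscRetraction z‖ ≤ 1 := by
  rw [unitDiscRetraction, norm_smul, norm_inv, Real.norm_of_nonneg (by positivity)]
  exact inv_mul_le_one_of_le₀ (le_max_right _ _) (by positivity)

theorem unitDiscRetraction_mul {u : ℂ} (hu : ‖u‖ = 1) (z : ℂ) :
    unitDiscRetraction (u * z) = u * unitDiscRetraction z := by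
  simp only [unitDiscRetraction, norm_mul, hu, one_mul, mul_smul_comm]

namespace TBundle

theorem coe_ne_zero (L : TBundle E) (t : L.carrier) : (t : E) ≠ 0 :=
  fun h => L.zero_not_mem (h ▸ t.2)

/-- Since `L ∪ {0}` is compact, leaving every compact subset of `L` means approaching `0`. -/
theorem tendsto_cocompact {β : Type*} [TopologicalSpace β] (L : TBundle E) {f : E → β}
    (hf : Continuous f) : Tendsto (fun t : L.carrier => f t) (cocompact L.carrier) (𝓝 (f 0)) := by
  refine (nhds_basis_opens (f 0)).tendsto_right_iff.2 fun V ⟨h0V, hV⟩ => ?_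
  set K := (L.carrier ∪ {0}) \ f ⁻¹' V
  have hKL : K ⊆ L.carrier := by
    rintro x ⟨hx | rfl, hxV⟩
    exacts [hx, absurd h0V hxV]
  have hK : IsCompact ((↑) ⁻¹' K : Set L.carrier) := by
    rw [Subtype.isCompact_iff, Subtype.image_preimage_coe, inter_eq_right.2 hKL]
    exact L.isCompact_union.diff (hV.preimage hf)
  filter_upwards [hK.compl_mem_cocompact] with t ht
  by_contra htV
  exact ht ⟨Or.inl t.2, htV⟩

theorem isClosed_C0T (L : TBundle E) : IsClosed (L.C0T : Set C₀(L.carrier, ℂ)) := by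
  have heval (t : L.carrier) : Continuous fun a : C₀(L.carrier, ℂ) => a t :=
    (continuous_eval_const (F := BoundedContinuousFunction L.carrier ℂ) t).comp
      ZeroAtInftyContinuousMap.isometry_toBCF.continuous
  have hC0T : (L.C0T : Set C₀(L.carrier, ℂ)) =
      ⋂ (z : ℂ) (hz : ‖z‖ = 1) (t : L.carrier), {a | a (L.sm z hz t) = z * a t} := by
    ext a
    simp only [mem_iInter]
    rfl
  rw [hC0T]
  exact isClosed_iInter fun z => isClosed_iInter fun hz => isClosed_iInter fun t =>
    isClosed_eq (heval _) ((heval t).const_smul z)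

instance (L : TBundle E) : CompleteSpace L.C0T :=
  L.isClosed_C0T.completeSpace_coe

def peakFunction (L : TBundle E) (g : StrongDual ℂ E) : L.C0T :=
  ⟨⟨⟨fun t => unitDiscRetraction (g t),
      continuous_unitDiscRetraction.comp (g.continuous.comp continuous_subtype_val)⟩,
    by simpa [unitDiscRetraction] using
      L.tendsto_cocompact (continuous_unitDiscRetraction.comp g.continuous)⟩,
    fun z hz t => by simp [TBundle.sm, unitDiscRetraction_mul hz]⟩

theorem peakFunction_apply (L : TBundle E) (g : StrongDual ℂ E) (t : L.carrier) :
    (L.peakFunction g).1 t = unitDiscRetraction (g t) := rfl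

theorem norm_peakFunction_le (L : TBundle E) (g : StrongDual ℂ E) : ‖L.peakFunction g‖ ≤ 1 := by
  rw [Submodule.coe_norm, ← ZeroAtInftyContinuousMap.norm_toBCF_eq_norm]
  exact (BoundedContinuousFunction.norm_le zero_le_one).2 fun t => norm_unitDiscRetraction_le _

end TBundle

section MainStatements

variable [IsTopologicalAddGroup E] [ContinuousSMul ℂ E] [T2Space E]
  [Module ℝ E] [IsScalarTower ℝ ℂ E] [LocallyConvexSpace ℝ E]
  [IsTopologicalAddGroup F] [ContinuousSMul ℂ F] [T2Space F]
  [Module ℝ F] [IsScalarTower ℝ ℂ F] [LocallyConvexSpace ℝ F]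

theorem r_locally_bounded_general (L₁ : TBundle E) (L₂ : TBundle F)
    (T : L₁.C0T →ₗ[ℂ] L₂.C0T)
    (r : L₂.carrier → ℝ) (φ : L₂.carrier → L₁.carrier)
    (hrφ : ∀ s ∈ Lcont T, ∀ a : L₁.C0T, (T a).1 s = (r s : ℂ) * a.1 (φ s)) :
    ∀ s₀ ∈ Lcont T, ∃ U : Set L₂.carrier, IsOpen U ∧ s₀ ∈ U ∧
      ∃ M : ℝ, 0 < M ∧ ∀ s ∈ U ∩ Lcont T, r s ≤ M := by
  have : ContinuousSMul ℝ E := IsScalarTower.continuousSMul ℂ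
  have : SeparatingDual ℂ E := RCLike.separatingDual_of_real
  obtain ⟨C, hC0, hC⟩ :=
    ZeroAtInftyContinuousMap.exists_bound_of_continuous_eval (D := L₁.C0T) (L₂.C0T.subtype ∘ₗ T)
  refine fun s₀ _ => ⟨univ, isOpen_univ, mem_univ s₀, C + 1, by positivity, ?_⟩
  rintro s ⟨-, hs⟩
  obtain ⟨g, hg⟩ := SeparatingDual.exists_eq_one (R := ℂ) (L₁.coe_ne_zero (φ s))
  let a := L₁.peakFunction g
  calc r s ≤ ‖(T a).1 s‖ := by
        rw [hrφ s hs, L₁.peakFunction_apply, hg, unitDiscRetraction_one, mul_one,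
          Complex.norm_real]
        exact le_abs_self _
    _ ≤ C * ‖a‖ := hC s hs.2 a
    _ ≤ C * 1 := by gcongr; exact L₁.norm_peakFunction_le g
    _ ≤ C + 1 := by linarith

/-- With `T`, `L₂^c`, `r`, `φ` as in the context: `r` is locally
bounded at every point of `L₂^c`. -/
theorem r_locally_bounded (L₁ : TBundle E) (L₂ : TBundle F)
    (T : L₁.C0T →ₗ[ℂ] L₂.C0T) (hT : OrthogonalityPreserving L₁ L₂ T)
    (r : L₂.carrier → ℝ) (φ : L₂.carrier → L₁.carrier)
    (hr : ∀ s ∈ Lcont T, 0 < r s)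
    (hrφ : ∀ s ∈ Lcont T, ∀ a : L₁.C0T, (T a).1 s = (r s : ℂ) * a.1 (φ s)) :
    ∀ s₀ ∈ Lcont T, ∃ U : Set L₂.carrier, IsOpen U ∧ s₀ ∈ U ∧
      ∃ M : ℝ, 0 < M ∧ ∀ s ∈ U ∩ Lcont T, r s ≤ M :=
  r_locally_bounded_general L₁ L₂ T r φ hrφ

end MainStatements
end
end

section
/- With L₁, L₂, T, L₂^c, r, φ as in the context: the map φ : L₂^c → L₁ is continuous (where L₂^c carries the subspace topology of L₂ and L₁ its own topology). -/
/-!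
Fix `s ∈ L₂^c` and a cluster point `y ∈ L̂₁` of `φ` at `s`, realised along an ultrafilter.
By continuity of `T a`, `r(s') a(φ s') = T(a)(s') → T(a)(s) = r(s) a(φ s)` for every `a`.
Test this on the equivariant functions `a = g(‖ℓ ·‖) ℓ`, `ℓ` a continuous functional (these
separate points by Hahn–Banach): a `g` vanishing near `0` rules out `y = 0`; then `r(s')`
converges to some `ρ ≥ 0`, so `r(s) a(φ s) = ρ a(y)` for all such `a`, and choosing `g` to
separate `‖ℓ (φ s)‖` from `‖ℓ y‖` forces `y = φ s`. So `φ s` is the only cluster point.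
-/

open scoped ZeroAtInfty

noncomputable section

variable {E F : Type*} [AddCommGroup E] [Module ℂ E] [TopologicalSpace E]
  [AddCommGroup F] [Module ℂ F] [TopologicalSpace F]

open Filter Topology

instance RCLike.separatingDual {𝕜 V : Type*} [RCLike 𝕜] [TopologicalSpace V] [AddCommGroup V]
    [IsTopologicalAddGroup V] [Module 𝕜 V] [Module ℝ V] [IsScalarTower ℝ 𝕜 V]
    [ContinuousSMul 𝕜 V] [LocallyConvexSpace ℝ V] [T1Space V] : SeparatingDual 𝕜 V :=
  ⟨fun _ hx ↦ RCLike.geometric_hahn_banach_point_point hx |>.imp fun f hf hf' ↦ by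
    simp [hf'] at hf⟩

namespace TBundle

variable (L : TBundle E)

theorem isCompact_preimage_val {K : Set E} (hK : IsClosed K) (h0 : (0 : E) ∉ K) :
    IsCompact ((↑) ⁻¹' K : Set L.carrier) := by
  have hsub : L.hat ∩ K ⊆ Set.range ((↑) : L.carrier → E) := by
    rintro x ⟨hx | rfl, hxK⟩
    · exact ⟨⟨x, hx⟩, rfl⟩
    · exact absurd hxK h0
  convert (IsInducing.subtypeVal.isCompact_preimage_iff hsub).2
    (L.isCompact_union.inter_right hK) using 1
  ext t
  simp [hat, t.2]

/-- The restriction vanishes at infinity on `L` because `B` vanishes at the point `0` that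
compactifies `L`. -/
def ofEquivariant (B : E → ℂ) (hB : Continuous B) (hB0 : B 0 = 0)
    (hB_smul : ∀ z : ℂ, ‖z‖ = 1 → ∀ x, B (z • x) = z * B x) : L.C0T :=
  ⟨⟨⟨fun t => B t, hB.comp continuous_subtype_val⟩, by
    refine Metric.tendsto_nhds.2 fun ε hε => hasBasis_cocompact.eventually_iff.2
      ⟨_, L.isCompact_preimage_val (isClosed_le continuous_const hB.norm)
        (by simpa [hB0] using hε), fun t ht => ?_⟩
    simpa using ht⟩, fun z hz t => hB_smul z hz t⟩

end TBundle

def radial (ℓ : StrongDual ℂ E) (g : ℝ → ℝ) (x : E) : ℂ := g ‖ℓ x‖ * ℓ x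

section Radial

variable (ℓ : StrongDual ℂ E) (g : ℝ → ℝ)

theorem continuous_radial {g : ℝ → ℝ} (hg : Continuous g) : Continuous (radial ℓ g) := by
  unfold radial
  fun_prop

theorem radial_zero : radial ℓ g 0 = 0 := by
  simp [radial]

theorem radial_smul {z : ℂ} (hz : ‖z‖ = 1) (x : E) : radial ℓ g (z • x) = z * radial ℓ g x := by
  simp only [radial, map_smul, smul_eq_mul, norm_mul, hz, one_mul]
  ring

end Radial

section Separation

variable [SeparatingDual ℂ E]

theorem eq_of_forall_radial_eq {x y : E} {r ρ : ℝ} (hx : x ≠ 0) (hr : 0 < r) (hρ : 0 ≤ ρ)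
    (h : ∀ (ℓ : StrongDual ℂ E) (g : ℝ → ℝ), Continuous g →
      (r : ℂ) * radial ℓ g x = ρ * radial ℓ g y) :
    y = x := by
  have hlin (ℓ : StrongDual ℂ E) : (r : ℂ) * ℓ x = ρ * ℓ y := by
    simpa [radial] using h ℓ (fun _ => 1) continuous_const
  obtain ⟨ℓ, hℓ⟩ := SeparatingDual.exists_ne_zero (R := ℂ) hx
  have hnorm : r * ‖ℓ x‖ = ρ * ‖ℓ y‖ := by
    simpa [norm_mul, abs_of_pos hr, abs_of_nonneg hρ] using congrArg norm (hlin ℓ)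
  have hnorm_eq : ‖ℓ x‖ = ‖ℓ y‖ := by
    by_contra hne
    -- `g` is `1` at `‖ℓ x‖` and `0` at `‖ℓ y‖`
    have := h ℓ (fun t => (t - ‖ℓ y‖) / (‖ℓ x‖ - ‖ℓ y‖)) (by fun_prop)
    simp [radial, sub_ne_zero.2 hne, hr.ne', hℓ] at this
  have hρr : ρ = r := by
    rw [← hnorm_eq] at hnorm
    exact (mul_right_cancel₀ (norm_pos_iff.2 hℓ).ne' hnorm).symm
  have hsmul : (r : ℂ) • x = (r : ℂ) • y :=
    (SeparatingDual.eq_iff_forall_dual_eq (R := ℂ)).2 fun ℓ => by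
      rw [map_smul, map_smul, smul_eq_mul, smul_eq_mul, hlin ℓ, hρr]
  exact (smul_right_injective E (by exact_mod_cast hr.ne' : (r : ℂ) ≠ 0) hsmul).symm

variable {ι : Type*} {l : Filter ι} [l.NeBot]

theorem ne_zero_of_tendsto_radial {R : ι → ℂ} {ψ : ι → E} {c : ℂ} {x y : E} (hc : c ≠ 0)
    (hx : x ≠ 0) (hψ : Tendsto ψ l (𝓝 y))
    (h : ∀ (ℓ : StrongDual ℂ E) (g : ℝ → ℝ), Continuous g →
      Tendsto (fun i => R i * radial ℓ g (ψ i)) l (𝓝 (c * radial ℓ g x))) :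
    y ≠ 0 := by
  rintro rfl
  obtain ⟨ℓ, hℓ⟩ := SeparatingDual.exists_ne_zero (R := ℂ) hx
  have hα : 0 < ‖ℓ x‖ := norm_pos_iff.2 hℓ
  -- `g` vanishes on `[0, ‖ℓ x‖ / 2]` and is `1` at `‖ℓ x‖`
  set g : ℝ → ℝ := fun t => max 0 (2 * t - ‖ℓ x‖) / ‖ℓ x‖ with hg
  have hsmall : ∀ᶠ i in l, ‖ℓ (ψ i)‖ < ‖ℓ x‖ / 2 := by
    have := ((ℓ.continuous.tendsto 0).comp hψ).norm
    rw [map_zero, norm_zero] at this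
    exact this.eventually (eventually_lt_nhds (by positivity))
  have hlim : Tendsto (fun i => R i * radial ℓ g (ψ i)) l (𝓝 0) :=
    tendsto_const_nhds.congr' <| hsmall.mono fun i hi => by
      have : max 0 (2 * ‖ℓ (ψ i)‖ - ‖ℓ x‖) = 0 := max_eq_left (by linarith)
      simp [radial, hg, this]
  have := tendsto_nhds_unique (h ℓ g (by fun_prop)) hlim
  have hgx : g ‖ℓ x‖ = 1 := by
    show max 0 (2 * ‖ℓ x‖ - ‖ℓ x‖) / ‖ℓ x‖ = 1
    rw [max_eq_right (by linarith), two_mul, add_sub_cancel_right, div_self hα.ne']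
  simp [radial, hgx, hc, hℓ] at this

theorem eq_of_tendsto_radial {R : ι → ℝ} {ψ : ι → E} {r : ℝ} {x y : E}
    (hR : ∀ᶠ i in l, 0 ≤ R i) (hr : 0 < r) (hx : x ≠ 0) (hψ : Tendsto ψ l (𝓝 y))
    (h : ∀ (ℓ : StrongDual ℂ E) (g : ℝ → ℝ), Continuous g →
      Tendsto (fun i => (R i : ℂ) * radial ℓ g (ψ i)) l (𝓝 (r * radial ℓ g x))) :
    y = x := by
  have hy : y ≠ 0 := ne_zero_of_tendsto_radial (by exact_mod_cast hr.ne') hx hψ h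
  obtain ⟨ℓ, hℓ⟩ := SeparatingDual.exists_ne_zero (R := ℂ) hy
  have hℓψ : Tendsto (fun i => ℓ (ψ i)) l (𝓝 (ℓ y)) := (ℓ.continuous.tendsto y).comp hψ
  have hR_lim : Tendsto R l (𝓝 (r * ℓ x / ℓ y : ℂ).re) := by
    have hprod : Tendsto (fun i => (R i : ℂ) * ℓ (ψ i)) l (𝓝 (r * ℓ x)) := by
      simpa [radial] using h ℓ (fun _ => 1) continuous_const
    have hquot := hprod.div hℓψ hℓ
    refine ((Complex.continuous_re.tendsto _).comp hquot).congr' <|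
      (hℓψ.eventually_ne hℓ).mono fun i hi => ?_
    simp [hi]
  refine eq_of_forall_radial_eq hx hr (ge_of_tendsto hR_lim hR)
    fun ℓ' g hg => tendsto_nhds_unique (h ℓ' g hg) ?_
  exact ((Complex.continuous_ofReal.tendsto _).comp hR_lim).mul
    (((continuous_radial ℓ' hg).tendsto y).comp hψ)

end Separation

section MainStatements

variable [IsTopologicalAddGroup E] [ContinuousSMul ℂ E] [T2Space E]
  [Module ℝ E] [IsScalarTower ℝ ℂ E] [LocallyConvexSpace ℝ E]
  [IsTopologicalAddGroup F] [ContinuousSMul ℂ F] [T2Space F]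
  [Module ℝ F] [IsScalarTower ℝ ℂ F] [LocallyConvexSpace ℝ F]

theorem phi_continuousOn_general (L₁ : TBundle E) (L₂ : TBundle F)
    (T : L₁.C0T →ₗ[ℂ] L₂.C0T)
    (r : L₂.carrier → ℝ) (φ : L₂.carrier → L₁.carrier)
    (hr : ∀ s ∈ Lcont T, 0 < r s)
    (hrφ : ∀ s ∈ Lcont T, ∀ a : L₁.C0T, (T a).1 s = (r s : ℂ) * a.1 (φ s)) :
    ContinuousOn φ (Lcont T) := by
  intro s hs
  rw [ContinuousWithinAt, IsEmbedding.subtypeVal.tendsto_nhds_iff]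
  refine L₁.isCompact_union.tendsto_nhds_of_unique_mapClusterPt
    (.of_forall fun s' => Or.inl (φ s').2) fun y _ hy => ?_
  obtain ⟨U, hU, hUy⟩ := mapClusterPt_iff_ultrafilter.1 hy
  have hU_cont : ∀ᶠ s' in (U : Filter L₂.carrier), s' ∈ Lcont T := hU self_mem_nhdsWithin
  refine eq_of_tendsto_radial (hU_cont.mono fun s' hs' => (hr s' hs').le) (hr s hs)
    (fun h => L₁.zero_not_mem (h ▸ (φ s).2)) hUy fun ℓ g hg => ?_
  let b := L₁.ofEquivariant (radial ℓ g) (continuous_radial ℓ hg) (radial_zero ℓ g)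
    fun _ hz => radial_smul ℓ g hz
  have hTb : Tendsto (fun s' => (T b).1 s') U (𝓝 ((T b).1 s)) :=
    ((T b).1.continuous.tendsto s).mono_left (hU.trans nhdsWithin_le_nhds)
  rw [hrφ s hs] at hTb
  exact hTb.congr' (hU_cont.mono fun s' hs' => hrφ s' hs' b)

/-- With `T`, `L₂^c`, `r`, `φ` as in the context: `φ` is continuous
on `L₂^c`. -/
theorem phi_continuousOn (L₁ : TBundle E) (L₂ : TBundle F)
    (T : L₁.C0T →ₗ[ℂ] L₂.C0T) (hT : OrthogonalityPreserving L₁ L₂ T)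
    (r : L₂.carrier → ℝ) (φ : L₂.carrier → L₁.carrier)
    (hr : ∀ s ∈ Lcont T, 0 < r s)
    (hrφ : ∀ s ∈ Lcont T, ∀ a : L₁.C0T, (T a).1 s = (r s : ℂ) * a.1 (φ s)) :
    ContinuousOn φ (Lcont T) :=
  phi_continuousOn_general L₁ L₂ T r φ hr hrφ

end MainStatements
end
end

section
/- With L₁, L₂, T, L₂^c, r, φ as in the context: the function r : L₂^c → (0, ∞) is continuous (where L₂^c carries the subspace topology of L₂). -/
open scoped ZeroAtInfty

noncomputable section

variable {E F : Type*} [AddCommGroup E] [Module ℂ E] [TopologicalSpace E]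
  [AddCommGroup F] [Module ℂ F] [TopologicalSpace F]

/-! Near `s₀ ∈ L₂^c` fix `a` with `T(a)(s₀) ≠ 0`, so that `r = |T(a)| / |a ∘ φ|` near `s₀`
and it suffices that `|a ∘ φ|` is continuous at `s₀`. Given a level `m`, split `a` into the
orthogonal pieces `u(|a|)·a` and `v(|a|)·a`, where `u` and `v` are supported on opposite
sides of `m`. If `u(|a(φ s₀)|) ≠ 0`, then `T(u(|a|)·a)` is nonzero near `s₀` by continuity,
so by orthogonality `T(v(|a|)·a) = r · v(|a ∘ φ|) · a ∘ φ` vanishes near `s₀`: there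
`|a ∘ φ|` stays on the same side of `m` as `|a(φ s₀)|`. -/

open Filter Topology

def ramp (x : ℝ) : ℝ := max 0 (min 1 x)

@[fun_prop]
theorem continuous_ramp : Continuous ramp :=
  continuous_const.max (continuous_const.min continuous_id)

theorem abs_ramp_le_one (x : ℝ) : |ramp x| ≤ 1 := by
  unfold ramp
  rw [abs_le]
  constructor <;> simp

theorem ramp_eq_zero_iff {x : ℝ} : ramp x = 0 ↔ x ≤ 0 := by
  unfold ramp
  rcases le_or_gt x 0 with h | h
  · simp [h, h.trans zero_le_one]
  · simp [h.not_ge]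

theorem ramp_ne_zero_iff {x : ℝ} : ramp x ≠ 0 ↔ 0 < x :=
  ramp_eq_zero_iff.not.trans not_le

theorem ramp_mul_ramp_neg (x : ℝ) : ramp x * ramp (-x) = 0 := by
  rcases le_total x 0 with h | h
  · rw [ramp_eq_zero_iff.2 h, zero_mul]
  · rw [ramp_eq_zero_iff.2 (neg_nonpos.2 h), mul_zero]

def TBundle.rescaleByNorm (L : TBundle E) (a : L.C0T) (G : ℝ → ℝ) (hG : Continuous G)
    (hGb : ∀ x, |G x| ≤ 1) : L.C0T := by
  refine ⟨⟨⟨fun t => (G ‖a.1 t‖ : ℂ) * a.1 t, by fun_prop⟩, ?_⟩, ?_⟩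
  · refine squeeze_zero_norm (a := fun t => ‖a.1 t‖) (fun t => ?_) ?_
    · rw [norm_mul, Complex.norm_real, Real.norm_eq_abs]
      exact mul_le_of_le_one_left (norm_nonneg _) (hGb _)
    · simpa using a.1.zero_at_infty'.norm
  · intro z hz t
    have h : a.1 (L.sm z hz t) = z * a.1 t := a.2 z hz t
    change (G ‖a.1 (L.sm z hz t)‖ : ℂ) * a.1 (L.sm z hz t) = z * ((G ‖a.1 t‖ : ℂ) * a.1 t)
    rw [h, norm_mul, hz, one_mul]
    ring

theorem TBundle.rescaleByNorm_apply (L : TBundle E) (a : L.C0T) (G : ℝ → ℝ)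
    (hG : Continuous G) (hGb : ∀ x, |G x| ≤ 1) (t : L.carrier) :
    (L.rescaleByNorm a G hG hGb).1 t = (G ‖a.1 t‖ : ℂ) * a.1 t := rfl

section

variable {L₁ : TBundle E} {L₂ : TBundle F} {T : L₁.C0T →ₗ[ℂ] L₂.C0T}
  {r : L₂.carrier → ℝ} {φ : L₂.carrier → L₁.carrier} {s₀ : L₂.carrier} {a : L₁.C0T}

theorem OrthogonalityPreserving.eventually_apply_eq_zero (hT : OrthogonalityPreserving L₁ L₂ T)
    {b d : L₁.C0T} (hbd : ∀ t, b.1 t * d.1 t = 0) (hb : (T b).1 s₀ ≠ 0) :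
    ∀ᶠ s in 𝓝 s₀, (T d).1 s = 0 := by
  filter_upwards [(map_continuous (T b).1).continuousAt.eventually_ne hb] with s hs
  exact (mul_eq_zero.1 (hT b d hbd s)).resolve_left hs

theorem eventually_mul_apply_φ_ne_zero
    (hrφ : ∀ s ∈ Lcont T, ∀ a : L₁.C0T, (T a).1 s = (r s : ℂ) * a.1 (φ s))
    (ha : (T a).1 s₀ ≠ 0) : ∀ᶠ s in 𝓝[Lcont T] s₀, (r s : ℂ) * a.1 (φ s) ≠ 0 := by
  filter_upwards [self_mem_nhdsWithin,
    nhdsWithin_le_nhds ((map_continuous (T a).1).continuousAt.eventually_ne ha)] with s hs hne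
  rwa [← hrφ s hs a]

theorem eventually_norm_apply_φ_eq_zero (hT : OrthogonalityPreserving L₁ L₂ T)
    (hrφ : ∀ s ∈ Lcont T, ∀ a : L₁.C0T, (T a).1 s = (r s : ℂ) * a.1 (φ s))
    (hs₀ : s₀ ∈ Lcont T) (ha : (T a).1 s₀ ≠ 0) {u v : ℝ → ℝ} (hu : Continuous u)
    (hub : ∀ x, |u x| ≤ 1) (hv : Continuous v) (hvb : ∀ x, |v x| ≤ 1)
    (huv : ∀ x, u x * v x = 0) (hu₀ : u ‖a.1 (φ s₀)‖ ≠ 0) :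
    ∀ᶠ s in 𝓝[Lcont T] s₀, v ‖a.1 (φ s)‖ = 0 := by
  set b := L₁.rescaleByNorm a u hu hub
  set d := L₁.rescaleByNorm a v hv hvb
  have hbd : ∀ t, b.1 t * d.1 t = 0 := fun t => by
    simp only [b, d, TBundle.rescaleByNorm_apply]
    rw [mul_mul_mul_comm, ← Complex.ofReal_mul, huv, Complex.ofReal_zero, zero_mul]
  have hb : (T b).1 s₀ ≠ 0 := by
    rw [hrφ s₀ hs₀, TBundle.rescaleByNorm_apply, mul_left_comm, ← hrφ s₀ hs₀]
    exact mul_ne_zero (Complex.ofReal_ne_zero.2 hu₀) ha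
  filter_upwards [self_mem_nhdsWithin, nhdsWithin_le_nhds (hT.eventually_apply_eq_zero hbd hb),
    eventually_mul_apply_φ_ne_zero hrφ ha] with s hs hTd hne
  rw [hrφ s hs, TBundle.rescaleByNorm_apply, mul_left_comm] at hTd
  exact_mod_cast (mul_eq_zero.1 hTd).resolve_right hne

theorem continuousWithinAt_norm_apply_φ (hT : OrthogonalityPreserving L₁ L₂ T)
    (hrφ : ∀ s ∈ Lcont T, ∀ a : L₁.C0T, (T a).1 s = (r s : ℂ) * a.1 (φ s))
    (hs₀ : s₀ ∈ Lcont T) (ha : (T a).1 s₀ ≠ 0) :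
    ContinuousWithinAt (fun s => ‖a.1 (φ s)‖) (Lcont T) s₀ := by
  set c := ‖a.1 (φ s₀)‖
  have cutoff (σ m : ℝ) (hm : 0 < σ * (c - m)) :
      ∀ᶠ s in 𝓝[Lcont T] s₀, σ * (m - ‖a.1 (φ s)‖) ≤ 0 := by
    have huv (x : ℝ) : ramp (σ * (x - m)) * ramp (σ * (m - x)) = 0 := by
      rw [show σ * (m - x) = -(σ * (x - m)) by ring]
      exact ramp_mul_ramp_neg _
    filter_upwards [eventually_norm_apply_φ_eq_zero hT hrφ hs₀ ha (by fun_prop)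
      (fun _ => abs_ramp_le_one _) (by fun_prop) (fun _ => abs_ramp_le_one _) huv
      (ramp_ne_zero_iff.2 hm)] with s hs
    exact ramp_eq_zero_iff.1 hs
  rw [ContinuousWithinAt, tendsto_order]
  refine ⟨fun β hβ => ?_, fun β hβ => ?_⟩
  · filter_upwards [cutoff 1 ((β + c) / 2) (by linarith)] with s hs
    linarith
  · filter_upwards [cutoff (-1) ((β + c) / 2) (by linarith)] with s hs
    linarith

end

section MainStatements

variable [IsTopologicalAddGroup E] [ContinuousSMul ℂ E] [T2Space E]
  [Module ℝ E] [IsScalarTower ℝ ℂ E] [LocallyConvexSpace ℝ E]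
  [IsTopologicalAddGroup F] [ContinuousSMul ℂ F] [T2Space F]
  [Module ℝ F] [IsScalarTower ℝ ℂ F] [LocallyConvexSpace ℝ F]

/-- With `T`, `L₂^c`, `r`, `φ` as in the context: `r` is continuous
on `L₂^c`. -/
theorem r_continuousOn (L₁ : TBundle E) (L₂ : TBundle F)
    (T : L₁.C0T →ₗ[ℂ] L₂.C0T) (hT : OrthogonalityPreserving L₁ L₂ T)
    (r : L₂.carrier → ℝ) (φ : L₂.carrier → L₁.carrier)
    (hr : ∀ s ∈ Lcont T, 0 < r s)
    (hrφ : ∀ s ∈ Lcont T, ∀ a : L₁.C0T, (T a).1 s = (r s : ℂ) * a.1 (φ s)) :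
    ContinuousOn r (Lcont T) := by
  intro s₀ hs₀
  obtain ⟨a, ha⟩ := hs₀.1
  have hr_eq : r =ᶠ[𝓝[Lcont T] s₀] fun s => ‖(T a).1 s‖ / ‖a.1 (φ s)‖ := by
    filter_upwards [self_mem_nhdsWithin, eventually_mul_apply_φ_ne_zero hrφ ha] with s hs hne
    rw [hrφ s hs a, norm_mul, Complex.norm_real, Real.norm_of_nonneg (hr s hs).le,
      mul_div_cancel_right₀ _ (norm_ne_zero_iff.2 (right_ne_zero_of_mul hne))]
  have haφ : ‖a.1 (φ s₀)‖ ≠ 0 :=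
    norm_ne_zero_iff.2 (right_ne_zero_of_mul (hrφ s₀ hs₀ a ▸ ha))
  exact ((map_continuous (T a).1).norm.continuousWithinAt.div
    (continuousWithinAt_norm_apply_φ hT hrφ hs₀ ha) haφ).congr_of_eventuallyEq hr_eq
    (hr_eq.eq_of_nhdsWithin hs₀)

end MainStatements
end
end
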